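/- Let a_{n,m} be the triangle numbers. For every natural number μ ≥ 1 one has a_{2μ−1,μ} = (2μ)! / (2^μ · μ!), i.e. a_{2μ−1,μ} equals the double factorial (2μ−1)!!; equivalently, 2^μ · μ! · a_{2μ−1,μ} = (2μ)! as integers. -/
import Mathlib

open Nat

/-- The triangle numbers `a_{n,m}`: `a_{n,0} = 1`, `a_{0,m} = 0` for `m > 0`, and
`a_{n,m} = (n - 2(m-1)) a_{n-1,m-1} + a_{n-1,m}` for `n, m > 0`. -/
def triangleNum : ℕ → ℕ → ℤ
  | _, 0 => 1
  | 0, _ + 1 => 0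
  | n + 1, m + 1 => ((n : ℤ) + 1 - 2 * m) * triangleNum n m + triangleNum n (m + 1)

lemma key (N k : ℕ) : ((N:ℤ) - k) * (N.choose k) = (k+1) * N.choose (k+1) := by
  rcases le_or_gt k N with h | h
  · have := Nat.choose_succ_right_eq N k
    have hcast : ((N - k : ℕ) : ℤ) = (N:ℤ) - k := by
      exact_mod_cast Int.ofNat_sub h
    calc ((N:ℤ) - k) * (N.choose k) = ((N.choose k * (N - k) : ℕ) : ℤ) := by
          push_cast [hcast]; ring
      _ = ((N.choose (k+1) * (k+1) : ℕ) : ℤ) := by rw [← this]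
      _ = (k+1) * N.choose (k+1) := by push_cast; ring
  · rw [Nat.choose_eq_zero_of_lt h, Nat.choose_eq_zero_of_lt (by omega)]
    simp

lemma df_odd (m : ℕ) : ((2*m+1)‼ : ℤ) = (2*m+1) * (2*m-1)‼ := by
  cases m with
  | zero => decide
  | succ m =>
    have h1 : 2*(m+1)+1 = (2*m+1)+2 := by ring
    have h2 : 2*(m+1)-1 = 2*m+1 := by omega
    rw [h1, h2, Nat.doubleFactorial_add_two]
    push_cast; ring

lemma triangleNum_eq (n m : ℕ) :
    triangleNum n m = ((n+1).choose (2*m)) * ((2*m-1)‼ : ℤ) := by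
  induction n generalizing m with
  | zero =>
    cases m with
    | zero => simp [triangleNum]
    | succ m =>
      rw [triangleNum, Nat.choose_eq_zero_of_lt (by omega)]
      simp
  | succ n ih =>
    cases m with
    | zero => simp [triangleNum]
    | succ m =>
      rw [triangleNum, ih m, ih (m+1)]
      have h1 : 2*(m+1)-1 = 2*m+1 := by omega
      rw [h1, df_odd m]
      have h2 : 2*(m+1) = (2*m+1)+1 := by ring
      rw [h2]
      have hp : ((n+1+1).choose (2*m+1+1) : ℤ) =
          (n+1).choose (2*m+1) + (n+1).choose (2*m+1+1) := by
        exact_mod_cast congrArg (Nat.cast : ℕ → ℤ) (Nat.choose_succ_succ' (n+1) (2*m+1))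
      have k1 := key (n+1) (2*m)
      push_cast at k1 hp ⊢
      linear_combination ((2*m-1)‼ : ℤ) * k1 - (2*(m:ℤ)+1) * ((2*m-1)‼ : ℤ) * hp

/-- For every `μ ≥ 1`, `a_{2μ-1,μ} = (2μ)!/(2^μ μ!) = (2μ-1)!!`, i.e.
`2^μ · μ! · a_{2μ-1,μ} = (2μ)!` as integers. -/
theorem triangleNum_doubleFactorial (μ : ℕ) (hμ : 1 ≤ μ) :
    2 ^ μ * (μ.factorial : ℤ) * triangleNum (2 * μ - 1) μ = (2 * μ).factorial := by
  rw [triangleNum_eq]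
  have h1 : 2*μ - 1 + 1 = 2*μ := by omega
  rw [h1, Nat.choose_self]
  have h2 : 2*μ = (2*μ - 1) + 1 := by omega
  have hf : (2*μ)! = (2*μ)‼ * (2*μ-1)‼ := by
    rw [h2, Nat.factorial_eq_mul_doubleFactorial, ← h2]
  rw [hf, Nat.doubleFactorial_two_mul]
  push_cast; ring
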